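/- Adaptation near a jump discontinuity: let Ω ⊆ ℝ² be open with (0,0) ∈ Ω, let g : ℝ² → ℝ be of class C³ on Ω, and let K > 0. Take the data f_A = g(A), f_B = g(B), f_C = g(C), f_D = g(D), f_F = g(F) from the smooth function g (the value at the vertex E, which lies on the other side of the discontinuity, is not used). Then there exist constants C > 0 and h₀ > 0 such that for every 0 < h ≤ h₀ and every real number J_h with |J_h| ≤ K, the nonlinear reconstruction p̃ built with J_h from these data satisfies |g(x,y) − p̃(x,y)| ≤ C·h for all (x,y) in S_R. -/
import Mathlib
set_option maxHeartbeats 1000000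


set_option linter.unusedVariables false

/-- √3 -/
noncomputable def s3 : ℝ := Real.sqrt 3

/-- Vertices of the equilateral triangle of side `2h` and the midpoints of its sides. -/
noncomputable def ptA (h : ℝ) : ℝ × ℝ := (-h, s3 / 2 * h)
noncomputable def ptB (h : ℝ) : ℝ × ℝ := (-h / 2, 0)
noncomputable def ptC (h : ℝ) : ℝ × ℝ := (0, -(s3 / 2 * h))
noncomputable def ptD (h : ℝ) : ℝ × ℝ := (h / 2, 0)
noncomputable def ptE (h : ℝ) : ℝ × ℝ := (h, s3 / 2 * h)
noncomputable def ptF (h : ℝ) : ℝ × ℝ := (0, s3 / 2 * h)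

/-- Coefficients of the quadratic interpolant. -/
noncomputable def a00 (h fA fB fC fD fE fF : ℝ) : ℝ := 4 / 9 * (fB + fD + fF) - 1 / 9 * (fA + fC + fE)
noncomputable def a10 (h fA fB fC fD fE fF : ℝ) : ℝ := (-fA - 4 * fB + 4 * fD + fE) / (6 * h)
noncomputable def a01 (h fA fB fC fD fE fF : ℝ) : ℝ := s3 / (18 * h) * (fA - 4 * fB - 2 * fC - 4 * fD + fE + 8 * fF)
noncomputable def a20 (h fA fB fC fD fE fF : ℝ) : ℝ := (fA - 2 * fF + fE) / (2 * h ^ 2)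
noncomputable def a11 (h fA fB fC fD fE fF : ℝ) : ℝ := -(s3 / (3 * h ^ 2)) * (fA - 2 * fB + 2 * fD - fE)
noncomputable def a02 (h fA fB fC fD fE fF : ℝ) : ℝ := (fA - 4 * fB + 4 * fC - 4 * fD + fE + 2 * fF) / (6 * h ^ 2)

/-- The quadratic interpolant `p(x,y)`. -/
noncomputable def interp (h fA fB fC fD fE fF x y : ℝ) : ℝ :=
  a00 h fA fB fC fD fE fF + a10 h fA fB fC fD fE fF * x
    + a01 h fA fB fC fD fE fF * (y - s3 / 6 * h)
    + a20 h fA fB fC fD fE fF * x ^ 2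
    + a11 h fA fB fC fD fE fF * x * (y - s3 / 6 * h)
    + a02 h fA fB fC fD fE fF * (y - s3 / 6 * h) ^ 2

/-- Divided differences acting as smoothness indicators. -/
noncomputable def dA (h fA fB fC fD fE fF : ℝ) : ℝ := (fA - (fB + fF) + fD) / h
noncomputable def dC (h fA fB fC fD fE fF : ℝ) : ℝ := (fC - (fB + fD) + fF) / h
noncomputable def dE (h fA fB fC fD fE fF : ℝ) : ℝ := (fE - (fD + fF) + fB) / h

/-- Coefficients of the nonlinear reconstruction built with a mean value `J`. -/
noncomputable def t00 (h fA fB fC fD fE fF J : ℝ) : ℝ := 1 / 3 * (fB + fD + fF) - h / 3 * J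
noncomputable def t10 (h fA fB fC fD fE fF J : ℝ) : ℝ :=
  (fD - fB) / h - 1 / 6 * (2 * dA h fA fB fC fD fE fF + dC h fA fB fC fD fE fF) + 1 / 2 * J
noncomputable def t01 (h fA fB fC fD fE fF J : ℝ) : ℝ :=
  s3 / 6 * (dC h fA fB fC fD fE fF + 2 * (fF - fC) / h) + s3 / 6 * J
noncomputable def t20 (h fA fB fC fD fE fF J : ℝ) : ℝ :=
  -(3 / (2 * h)) * dC h fA fB fC fD fE fF + 3 / (2 * h) * J
noncomputable def t11 (h fA fB fC fD fE fF J : ℝ) : ℝ :=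
  -(2 * s3 / h) * dA h fA fB fC fD fE fF + s3 / (3 * h ^ 2) * (fD - 2 * fF + fB) + s3 / h * J
noncomputable def t02 (h fA fB fC fD fE fF J : ℝ) : ℝ :=
  -(1 / (2 * h)) * dC h fA fB fC fD fE fF + 1 / (2 * h) * J

/-- The nonlinear reconstruction `p̃(x,y)` built with `J`. -/
noncomputable def ptilde (h fA fB fC fD fE fF J x y : ℝ) : ℝ :=
  t00 h fA fB fC fD fE fF J + t10 h fA fB fC fD fE fF J * x
    + t01 h fA fB fC fD fE fF J * (y - s3 / 6 * h)
    + t20 h fA fB fC fD fE fF J * x ^ 2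
    + t11 h fA fB fC fD fE fF J * x * (y - s3 / 6 * h)
    + t02 h fA fB fC fD fE fF J * (y - s3 / 6 * h) ^ 2

/-- The closed equilateral triangle `S` with vertices `A, C, E`. -/
noncomputable def triS (h : ℝ) : Set (ℝ × ℝ) := convexHull ℝ {ptA h, ptC h, ptE h}
/-- The closed triangle `S_R` with vertices `B, D, F`. -/
noncomputable def triSR (h : ℝ) : Set (ℝ × ℝ) := convexHull ℝ {ptB h, ptD h, ptF h}

lemma s3_nonneg : 0 ≤ s3 := Real.sqrt_nonneg 3

lemma s3_le_two : s3 ≤ 2 := by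
  have h1 : s3 ^ 2 = 3 := Real.sq_sqrt (by norm_num)
  nlinarith [s3_nonneg]

lemma abs_mul_le' {u v bu bv : ℝ} (hu : |u| ≤ bu) (hv : |v| ≤ bv) : |u * v| ≤ bu * bv := by
  rw [abs_mul]
  exact mul_le_mul hu hv (abs_nonneg v) ((abs_nonneg u).trans hu)

lemma abs_sub'' (a b : ℝ) : |a - b| ≤ |a| + |b| := by
  calc |a - b| = |a + -b| := by rw [sub_eq_add_neg]
  _ ≤ |a| + |-b| := abs_add_le _ _
  _ = |a| + |b| := by rw [abs_neg]

lemma abs_add6 (p q r s t u : ℝ) : |p+q+r+s+t+u| ≤ |p|+|q|+|r|+|s|+|t|+|u| := by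
  have h1 := abs_add_le (p+q+r+s+t) u
  have h2 := abs_add_le (p+q+r+s) t
  have h3 := abs_add_le (p+q+r) s
  have h4 := abs_add_le (p+q) r
  have h5 := abs_add_le p q
  linarith

lemma ptilde_shift (h f0 a b c d f J x y : ℝ) (hh : h ≠ 0) :
    ptilde h (f0+a) (f0+b) (f0+c) (f0+d) 0 (f0+f) J x y
      = f0 + ptilde h a b c d 0 f J x y := by
  unfold ptilde t00 t10 t01 t20 t11 t02 dA dC
  field_simp
  ring

lemma ptilde_small (h L K a b c d f J x y : ℝ) (hh : 0 < h) (hL : 0 ≤ L)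
    (ha : |a| ≤ L*h) (hb : |b| ≤ L*h) (hc : |c| ≤ L*h) (hd : |d| ≤ L*h) (hf : |f| ≤ L*h)
    (hJ : |J| ≤ K) (hx : |x| ≤ h) (hY : |y - s3/6*h| ≤ h) :
    |ptilde h a b c d 0 f J x y| ≤ (36*L + 6*K) * h := by
  have hK : 0 ≤ K := (abs_nonneg J).trans hJ
  have ea := abs_le.mp ha
  have eb := abs_le.mp hb
  have ec := abs_le.mp hc
  have ed := abs_le.mp hd
  have ef := abs_le.mp hf
  have eJ := abs_le.mp hJ
  have ex := abs_le.mp hx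
  have eY := abs_le.mp hY
  -- divided differences
  have hdA : |dA h a b c d 0 f| ≤ 4*L := by
    unfold dA
    rw [abs_div, abs_of_pos hh, div_le_iff₀ hh, abs_le]
    constructor <;> linarith
  have hdC : |dC h a b c d 0 f| ≤ 4*L := by
    unfold dC
    rw [abs_div, abs_of_pos hh, div_le_iff₀ hh, abs_le]
    constructor <;> linarith
  have edA := abs_le.mp hdA
  have edC := abs_le.mp hdC
  -- basic quotient bounds
  have hdb : |(d - b)/h| ≤ 2*L := by
    rw [abs_div, abs_of_pos hh, div_le_iff₀ hh, abs_le]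
    constructor <;> linarith
  have hfc : |2*(f - c)/h| ≤ 4*L := by
    rw [abs_div, abs_of_pos hh, div_le_iff₀ hh, abs_le]
    constructor <;> linarith
  have hmid : |(d - 2*f + b)/(3*h)| ≤ 2*L := by
    rw [abs_div, abs_of_pos (by linarith : (0:ℝ) < 3*h), div_le_iff₀ (by linarith : (0:ℝ) < 3*h), abs_le]
    constructor <;> linarith
  have edb := abs_le.mp hdb
  have efc := abs_le.mp hfc
  have emid := abs_le.mp hmid
  have hx2 : x^2 ≤ h^2 := sq_le_sq' (by linarith) ex.2
  have hY2 : (y - s3/6*h)^2 ≤ h^2 := sq_le_sq' (by linarith) eY.2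
  have hs3 : |s3| ≤ 2 := by rw [abs_of_nonneg s3_nonneg]; exact s3_le_two
  -- term bounds
  have h00 : |t00 h a b c d 0 f J| ≤ L*h + K/3*h := by
    unfold t00
    refine (abs_sub'' _ _).trans (add_le_add ?_ ?_)
    · rw [abs_le]; constructor <;> linarith
    · have : |h/3| ≤ h/3 := by rw [abs_of_nonneg (by linarith)]
      have := abs_mul_le' this hJ
      linarith
  have h10 : |t10 h a b c d 0 f J * x| ≤ (4*L + K/2) * h := by
    refine abs_mul_le' ?_ hx
    unfold t10
    rw [abs_le]
    constructor <;> linarith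
  have h01 : |t01 h a b c d 0 f J * (y - s3/6*h)| ≤ (1/3*(8*L+K)) * h := by
    refine abs_mul_le' ?_ hY
    have e : t01 h a b c d 0 f J = s3/6 * (dC h a b c d 0 f + 2*(f - c)/h + J) := by
      unfold t01; ring
    rw [e]
    have h6 : |s3/6| ≤ 1/3 := by
      rw [abs_div, abs_of_nonneg (by norm_num : (0:ℝ) ≤ 6)]
      rw [div_le_iff₀ (by norm_num : (0:ℝ) < 6)]
      linarith [hs3]
    have hin : |dC h a b c d 0 f + 2*(f - c)/h + J| ≤ 8*L + K := by
      rw [abs_le]; constructor <;> linarith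
    exact abs_mul_le' h6 hin
  have h20 : |t20 h a b c d 0 f J * x^2| ≤ (K + 4*L) * (3/2*h) := by
    have e : t20 h a b c d 0 f J * x^2 = (J - dC h a b c d 0 f) * (3*x^2/(2*h)) := by
      unfold t20; ring
    rw [e]
    refine abs_mul_le' ?_ ?_
    · rw [abs_le]; constructor <;> linarith
    · rw [abs_div, abs_of_pos (by linarith : (0:ℝ) < 2*h), div_le_iff₀ (by linarith : (0:ℝ) < 2*h)]
      rw [abs_of_nonneg (by positivity)]
      nlinarith
  have h11 : |t11 h a b c d 0 f J * x * (y - s3/6*h)| ≤ (10*L + K) * (2*h) := by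
    have e : t11 h a b c d 0 f J * x * (y - s3/6*h)
        = (-(2*dA h a b c d 0 f) + (d - 2*f + b)/(3*h) + J) * (s3 * x * (y - s3/6*h) / h) := by
      unfold t11; field_simp
    rw [e]
    refine abs_mul_le' ?_ ?_
    · rw [abs_le]; constructor <;> linarith
    · rw [abs_div, abs_of_pos hh, div_le_iff₀ hh]
      have : |s3 * x * (y - s3/6*h)| ≤ 2 * h * h := abs_mul_le' (abs_mul_le' hs3 hx) hY
      linarith
  have h02 : |t02 h a b c d 0 f J * (y - s3/6*h)^2| ≤ (K + 4*L) * (h/2) := by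
    have e : t02 h a b c d 0 f J * (y - s3/6*h)^2
        = (J - dC h a b c d 0 f) * ((y - s3/6*h)^2/(2*h)) := by
      unfold t02; ring
    rw [e]
    refine abs_mul_le' ?_ ?_
    · rw [abs_le]; constructor <;> linarith
    · rw [abs_div, abs_of_pos (by linarith : (0:ℝ) < 2*h), div_le_iff₀ (by linarith : (0:ℝ) < 2*h)]
      rw [abs_of_nonneg (by positivity)]
      nlinarith
  have tri := abs_add6 (t00 h a b c d 0 f J) (t10 h a b c d 0 f J * x)
      (t01 h a b c d 0 f J * (y - s3/6*h)) (t20 h a b c d 0 f J * x^2)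
      (t11 h a b c d 0 f J * x * (y - s3/6*h)) (t02 h a b c d 0 f J * (y - s3/6*h)^2)
  have eptilde : ptilde h a b c d 0 f J x y
      = t00 h a b c d 0 f J + t10 h a b c d 0 f J * x
        + t01 h a b c d 0 f J * (y - s3/6*h) + t20 h a b c d 0 f J * x^2
        + t11 h a b c d 0 f J * x * (y - s3/6*h) + t02 h a b c d 0 f J * (y - s3/6*h)^2 := by
    unfold ptilde; ring
  rw [eptilde]
  linarith [tri, h00, h10, h01, h20, h11, h02, mul_nonneg hL hh.le, mul_nonneg hK hh.le]

lemma triSR_bounds {h : ℝ} (hh : 0 ≤ h) {z : ℝ × ℝ} (hz : z ∈ triSR h) :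
    |z.1| ≤ h ∧ 0 ≤ z.2 ∧ z.2 ≤ s3/2*h := by
  have hsub : triSR h ⊆ {p : ℝ × ℝ | |p.1| ≤ h ∧ 0 ≤ p.2 ∧ p.2 ≤ s3/2*h} := by
    apply convexHull_min
    · intro p hp
      have hs3h : 0 ≤ s3/2*h := mul_nonneg (div_nonneg s3_nonneg (by norm_num)) hh
      simp only [Set.mem_insert_iff, Set.mem_singleton_iff] at hp
      rcases hp with rfl | rfl | rfl <;>
        simp only [ptB, ptD, ptF, Set.mem_setOf_eq] <;>
        refine ⟨by rw [abs_le]; constructor <;> linarith, by linarith, by linarith⟩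
    · intro p hp q hq α β hα hβ hαβ
      simp only [Set.mem_setOf_eq] at *
      obtain ⟨hp1, hp2, hp3⟩ := hp
      obtain ⟨hq1, hq2, hq3⟩ := hq
      have ep := abs_le.mp hp1
      have eq' := abs_le.mp hq1
      have m1 : α * (-h) ≤ α * p.1 := mul_le_mul_of_nonneg_left ep.1 hα
      have m2 : α * p.1 ≤ α * h := mul_le_mul_of_nonneg_left ep.2 hα
      have m3 : β * (-h) ≤ β * q.1 := mul_le_mul_of_nonneg_left eq'.1 hβ
      have m4 : β * q.1 ≤ β * h := mul_le_mul_of_nonneg_left eq'.2 hβ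
      have m5 : 0 ≤ α * p.2 := mul_nonneg hα hp2
      have m6 : 0 ≤ β * q.2 := mul_nonneg hβ hq2
      have m7 : α * p.2 ≤ α * (s3/2*h) := mul_le_mul_of_nonneg_left hp3 hα
      have m8 : β * q.2 ≤ β * (s3/2*h) := mul_le_mul_of_nonneg_left hq3 hβ
      have key1 : α * h + β * h = h := by rw [← add_mul, hαβ, one_mul]
      have key2 : α * (s3/2*h) + β * (s3/2*h) = s3/2*h := by rw [← add_mul, hαβ, one_mul]
      refine ⟨?_, ?_, ?_⟩ <;>
        simp only [Prod.fst_add, Prod.snd_add, Prod.smul_fst, Prod.smul_snd, smul_eq_mul]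
      · rw [abs_le]; constructor <;> linarith
      · linarith
      · linarith
  exact hsub hz

lemma dist_pair_le {p : ℝ × ℝ} {h : ℝ} (h1 : |p.1| ≤ h) (h2 : |p.2| ≤ h) :
    dist p ((0:ℝ),(0:ℝ)) ≤ h := by
  rw [Prod.dist_eq]
  refine max_le ?_ ?_
  · simpa [Real.dist_eq] using h1
  · simpa [Real.dist_eq] using h2

/-- Adaptation near a jump discontinuity: if the data at `A, B, C, D, F` come from a `C³`
function `g` (the value at `E` is not used by `p̃`), then for any bounded `J_h` the
nonlinear reconstruction approximates `g` to first order on `S_R`. -/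
theorem ptilde_first_order_at_jump (Ω : Set (ℝ × ℝ)) (hΩ : IsOpen Ω) (hmem : (0, 0) ∈ Ω)
    (g : ℝ × ℝ → ℝ) (hg : ContDiffOn ℝ 3 g Ω) (K : ℝ) (hK : 0 < K) :
    ∃ C > 0, ∃ h₀ > 0, ∀ h : ℝ, 0 < h → h ≤ h₀ → ∀ Jh : ℝ, |Jh| ≤ K →
      ∀ z ∈ triSR h,
        |g z - ptilde h (g (ptA h)) (g (ptB h)) (g (ptC h)) (g (ptD h)) 0 (g (ptF h))
            Jh z.1 z.2| ≤ C * h := by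
  have hat : ContDiffAt ℝ 1 g (0, 0) :=
    (hg.contDiffAt (hΩ.mem_nhds hmem)).of_le (by norm_num)
  obtain ⟨Lnn, t, ht, hlip⟩ := hat.exists_lipschitzOnWith
  obtain ⟨ε, hε, hball⟩ := Metric.mem_nhds_iff.mp ht
  set L : ℝ := (Lnn : ℝ) with hLdef
  have hL : 0 ≤ L := Lnn.coe_nonneg
  refine ⟨37*L + 6*K + 1, by positivity, ε/2, by positivity, ?_⟩
  intro h hh hhε Jh hJ z hz
  have hmem0 : ((0:ℝ),(0:ℝ)) ∈ t := hball (Metric.mem_ball_self hε)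
  have key : ∀ p : ℝ × ℝ, dist p ((0:ℝ),(0:ℝ)) ≤ h → |g p - g (0,0)| ≤ L * h := by
    intro p hp
    have hpt : p ∈ t := hball (by rw [Metric.mem_ball]; linarith [hp])
    have hd := hlip.dist_le_mul p hpt ((0:ℝ),(0:ℝ)) hmem0
    rw [Real.dist_eq] at hd
    calc |g p - g (0,0)| ≤ L * dist p ((0:ℝ),(0:ℝ)) := hd
    _ ≤ L * h := mul_le_mul_of_nonneg_left hp hL
  have hs3h : s3/2*h ≤ h := by nlinarith [s3_le_two, s3_nonneg, hh.le]
  have hs3h0 : 0 ≤ s3/2*h := mul_nonneg (div_nonneg s3_nonneg (by norm_num)) hh.le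
  have habsA : dist (ptA h) ((0:ℝ),(0:ℝ)) ≤ h := by
    refine dist_pair_le ?_ ?_ <;> simp only [ptA] <;> rw [abs_le] <;>
      constructor <;> [skip; skip; skip; skip] <;> nlinarith [s3_le_two, s3_nonneg]
  have habsB : dist (ptB h) ((0:ℝ),(0:ℝ)) ≤ h := by
    refine dist_pair_le ?_ ?_ <;> simp only [ptB] <;> rw [abs_le] <;>
      constructor <;> nlinarith [s3_le_two, s3_nonneg]
  have habsC : dist (ptC h) ((0:ℝ),(0:ℝ)) ≤ h := by
    refine dist_pair_le ?_ ?_ <;> simp only [ptC] <;> rw [abs_le] <;>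
      constructor <;> nlinarith [s3_le_two, s3_nonneg]
  have habsD : dist (ptD h) ((0:ℝ),(0:ℝ)) ≤ h := by
    refine dist_pair_le ?_ ?_ <;> simp only [ptD] <;> rw [abs_le] <;>
      constructor <;> nlinarith [s3_le_two, s3_nonneg]
  have habsF : dist (ptF h) ((0:ℝ),(0:ℝ)) ≤ h := by
    refine dist_pair_le ?_ ?_ <;> simp only [ptF] <;> rw [abs_le] <;>
      constructor <;> nlinarith [s3_le_two, s3_nonneg]
  obtain ⟨hz1, hz2, hz3⟩ := triSR_bounds hh.le hz
  have habsz : dist z ((0:ℝ),(0:ℝ)) ≤ h := by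
    refine dist_pair_le hz1 ?_
    rw [abs_le]; constructor <;> linarith
  have eA := key _ habsA
  have eB := key _ habsB
  have eC := key _ habsC
  have eD := key _ habsD
  have eF := key _ habsF
  have ez := key _ habsz
  set f0 := g (0, 0) with hf0
  have hshift := ptilde_shift h f0 (g (ptA h) - f0) (g (ptB h) - f0) (g (ptC h) - f0)
      (g (ptD h) - f0) (g (ptF h) - f0) Jh z.1 z.2 hh.ne'
  have hcan : ∀ u : ℝ, f0 + (u - f0) = u := fun u => by ring
  rw [hcan, hcan, hcan, hcan, hcan] at hshift
  have hxb : |z.1| ≤ h := hz1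
  have hYb : |z.2 - s3/6*h| ≤ h := by
    rw [abs_le]
    constructor <;> nlinarith [s3_le_two, s3_nonneg, hh.le]
  have main := ptilde_small h L K (g (ptA h) - f0) (g (ptB h) - f0) (g (ptC h) - f0)
      (g (ptD h) - f0) (g (ptF h) - f0) Jh z.1 z.2 hh hL eA eB eC eD eF hJ hxb hYb
  rw [hshift]
  have hre : g z - (f0 + ptilde h (g (ptA h) - f0) (g (ptB h) - f0) (g (ptC h) - f0)
      (g (ptD h) - f0) 0 (g (ptF h) - f0) Jh z.1 z.2)
      = (g z - f0) - ptilde h (g (ptA h) - f0) (g (ptB h) - f0) (g (ptC h) - f0)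
      (g (ptD h) - f0) 0 (g (ptF h) - f0) Jh z.1 z.2 := by ring
  rw [hre]
  have tfin := (abs_sub'' (g z - f0) (ptilde h (g (ptA h) - f0) (g (ptB h) - f0) (g (ptC h) - f0)
      (g (ptD h) - f0) 0 (g (ptF h) - f0) Jh z.1 z.2)).trans (add_le_add ez main)
  have hKpos : (0:ℝ) ≤ K := hK.le
  calc _ ≤ L*h + (36*L + 6*K)*h := tfin
  _ ≤ (37*L + 6*K + 1) * h := by nlinarith [hh.le]
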